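/- arXiv:1902.00664 — 5 statements merged into one kernel-verified Lean document; each statement's English description precedes it below -/
import Mathlib

section
/- For every real λ and every real x, the function f(t) = t·coth(t) satisfies: the expression λ·(t² − sinh(t)²) − 2·(t² − t·sinh(t)·cosh(t)) is zero at t = 0, and for λ ≤ 4 it has no nonzero real root, i.e., if t ≠ 0 and λ ≤ 4 then λ·(t² − sinh(t)²) − 2·(t² − t·sinh(t)·cosh(t)) ≠ 0 (in fact it is positive for t ≠ 0). -/
/-!
The expression is affine in `λ` with slope `t² - sinh² t < 0`, so it suffices to treat `λ = 4`.
Substituting `u = 2t`, twice the expression at `λ = 4` becomes `u² + 4 - 4 cosh u + u sinh u`,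
which vanishes at `0` together with its first three derivatives and whose fourth derivative is
`u sinh u > 0`; integrating four times from `0` gives positivity for `u > 0`, and the function
is even.
-/

open Real

lemma pos_of_hasDerivAt_of_map_zero {f f' : ℝ → ℝ} (hf : ∀ x, HasDerivAt f (f' x) x)
    (hf0 : f 0 = 0) (hf' : ∀ x, 0 < x → 0 < f' x) {x : ℝ} (hx : 0 < x) : 0 < f x := by
  have hmono : StrictMonoOn f (Set.Ici 0) :=
    strictMonoOn_of_hasDerivWithinAt_pos (convex_Ici 0)
      (fun y _ ↦ (hf y).continuousAt.continuousWithinAt) (fun y _ ↦ (hf y).hasDerivWithinAt)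
      (fun y hy ↦ hf' y (by rwa [interior_Ici] at hy))
  simpa [hf0] using hmono Set.self_mem_Ici hx.le hx

namespace Real

lemma mul_cosh_sub_sinh_pos {x : ℝ} (hx : 0 < x) : 0 < x * cosh x - sinh x :=
  pos_of_hasDerivAt_of_map_zero (f := fun x ↦ x * cosh x - sinh x)
    (fun y ↦ (((hasDerivAt_id y).mul (hasDerivAt_cosh y)).sub (hasDerivAt_sinh y)).congr_deriv
      (by simp only [id_eq]; ring))
    (by simp) (fun y hy ↦ mul_pos hy (sinh_pos_iff.mpr hy)) hx

lemma two_sub_two_mul_cosh_add_mul_sinh_pos {x : ℝ} (hx : 0 < x) :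
    0 < 2 - 2 * cosh x + x * sinh x :=
  pos_of_hasDerivAt_of_map_zero (f := fun x ↦ 2 - 2 * cosh x + x * sinh x)
    (fun y ↦ (((hasDerivAt_const y 2).sub ((hasDerivAt_cosh y).const_mul 2)).add
      ((hasDerivAt_id y).mul (hasDerivAt_sinh y))).congr_deriv (by simp only [id_eq]; ring))
    (by simp) (fun _ hy ↦ mul_cosh_sub_sinh_pos hy) hx

lemma two_mul_sub_three_mul_sinh_add_mul_cosh_pos {x : ℝ} (hx : 0 < x) :
    0 < 2 * x - 3 * sinh x + x * cosh x :=
  pos_of_hasDerivAt_of_map_zero (f := fun x ↦ 2 * x - 3 * sinh x + x * cosh x)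
    (fun y ↦ ((((hasDerivAt_id y).const_mul 2).sub ((hasDerivAt_sinh y).const_mul 3)).add
      ((hasDerivAt_id y).mul (hasDerivAt_cosh y))).congr_deriv (by simp only [id_eq]; ring))
    (by simp) (fun _ hy ↦ two_sub_two_mul_cosh_add_mul_sinh_pos hy) hx

lemma sq_add_four_sub_four_mul_cosh_add_mul_sinh_pos {x : ℝ} (hx : 0 < x) :
    0 < x ^ 2 + 4 - 4 * cosh x + x * sinh x :=
  pos_of_hasDerivAt_of_map_zero (f := fun x ↦ x ^ 2 + 4 - 4 * cosh x + x * sinh x)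
    (fun y ↦ (((((hasDerivAt_id y).pow 2).add (hasDerivAt_const y 4)).sub
      ((hasDerivAt_cosh y).const_mul 4)).add
        ((hasDerivAt_id y).mul (hasDerivAt_sinh y))).congr_deriv (by simp only [id_eq]; ring))
    (by simp) (fun _ hy ↦ two_mul_sub_three_mul_sinh_add_mul_cosh_pos hy) hx

lemma sq_sub_two_mul_sinh_sq_add_mul_sinh_mul_cosh_pos {t : ℝ} (ht : t ≠ 0) :
    0 < t ^ 2 - 2 * sinh t ^ 2 + t * sinh t * cosh t := by
  have of_pos : ∀ s : ℝ, 0 < s → 0 < s ^ 2 - 2 * sinh s ^ 2 + s * sinh s * cosh s := by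
    intro s hs
    have h := sq_add_four_sub_four_mul_cosh_add_mul_sinh_pos (mul_pos two_pos hs)
    rw [cosh_two_mul, sinh_two_mul, cosh_sq] at h
    linarith
  rcases ht.lt_or_gt with hneg | hpos
  · simpa using of_pos (-t) (neg_pos.mpr hneg)
  · exact of_pos t hpos

lemma sq_lt_sinh_sq {t : ℝ} (ht : t ≠ 0) : t ^ 2 < sinh t ^ 2 := by
  rw [sq_lt_sq, abs_sinh]
  exact self_lt_sinh_iff.mpr (abs_pos.mpr ht)

end Real

theorem stmt_0 (lam : ℝ) :
    (lam * ((0:ℝ)^2 - Real.sinh 0 ^ 2) - 2 * ((0:ℝ)^2 - 0 * Real.sinh 0 * Real.cosh 0) = 0) ∧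
    (∀ t : ℝ, t ≠ 0 → lam ≤ 4 →
      0 < lam * (t^2 - Real.sinh t ^ 2) - 2 * (t^2 - t * Real.sinh t * Real.cosh t)) := by
  refine ⟨by simp, fun t ht hlam ↦ ?_⟩
  have hslope : 0 ≤ (lam - 4) * (t ^ 2 - sinh t ^ 2) :=
    mul_nonneg_of_nonpos_of_nonpos (by linarith) (by linarith [sq_lt_sinh_sq ht])
  have hfour := sq_sub_two_mul_sinh_sq_add_mul_sinh_mul_cosh_pos ht
  linarith
end

section
/- If λ > 4, then the function g(t) = λ·(t² − sinh(t)²) − 2·(t² − t·sinh(t)·cosh(t)) has a nonzero real root; i.e., there exists t ≠ 0 with g(t) = 0. -/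
/-!
Substituting `s = 2t` turns twice the function into
`h(s) = s (sinh s - s) - λ (cosh s - 1 - s²/2)`. Comparing power series termwise gives
`h(s) ≤ s⁴/24 · (4 cosh s - λ)`, which is negative for small `s > 0` once `λ > 4`, while
`cosh s ≤ sinh s + 1` makes `h(λ) > 0`. The intermediate value theorem gives a positive root.
-/

open Real Set Filter Topology Nat

lemma Real.one_add_sq_div_two_add_pow_four_div_le_cosh (x : ℝ) :
    1 + x ^ 2 / 2 + x ^ 4 / 24 ≤ cosh x := by
  have h := sum_le_hasSum (Finset.range 3)
    (fun n _ => div_nonneg ((even_two_mul n).pow_nonneg x) (cast_nonneg _)) (hasSum_cosh x)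
  norm_num [Finset.sum_range_succ, Nat.factorial] at h
  linarith

lemma Real.sinh_sub_self_le {x : ℝ} (hx : 0 ≤ x) : sinh x - x ≤ x ^ 3 / 6 * cosh x := by
  have hsinh : HasSum (fun n ↦ x ^ (2 * (n + 1) + 1) / ↑(2 * (n + 1) + 1)!) (sinh x - x) := by
    simpa using (hasSum_nat_add_iff' 1).mpr (hasSum_sinh x)
  refine hasSum_le (fun n => ?_) hsinh ((hasSum_cosh x).mul_left (x ^ 3 / 6))
  have hfact : ((2 * n)! * 6 : ℝ) ≤ (2 * (n + 1) + 1)! := by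
    have := Nat.le_of_dvd (factorial_pos _) (factorial_mul_factorial_dvd_factorial_add (2 * n) 3)
    exact_mod_cast (show (2 * n)! * 6 ≤ (2 * (n + 1) + 1)! from this)
  calc x ^ (2 * (n + 1) + 1) / ↑(2 * (n + 1) + 1)!
      = x ^ 3 * x ^ (2 * n) / ↑(2 * (n + 1) + 1)! := by ring
    _ ≤ x ^ 3 * x ^ (2 * n) / ((2 * n)! * 6) := by gcongr
    _ = x ^ 3 / 6 * (x ^ (2 * n) / ↑(2 * n)!) := by field_simp

lemma Real.cosh_le_sinh_add_one {x : ℝ} (hx : 0 ≤ x) : cosh x ≤ sinh x + 1 := by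
  have := cosh_sub_sinh x
  have : exp (-x) ≤ 1 := exp_le_one_iff.2 (neg_nonpos.2 hx)
  linarith

lemma Real.exists_pos_cosh_lt {c : ℝ} (hc : 1 < c) : ∃ x, 0 < x ∧ cosh x < c := by
  have h : ∀ᶠ x in 𝓝[>] (0 : ℝ), cosh x < c :=
    nhdsWithin_le_nhds <| continuous_cosh.continuousAt.eventually_lt continuousAt_const
      (by rwa [cosh_zero])
  obtain ⟨x, hx, hpos⟩ := (h.and self_mem_nhdsWithin).exists
  exact ⟨x, hpos, hx⟩

noncomputable def coshGap (lam s : ℝ) : ℝ := s * (sinh s - s) - lam * (cosh s - 1 - s ^ 2 / 2)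

lemma continuous_coshGap (lam : ℝ) : Continuous (coshGap lam) := by
  unfold coshGap; fun_prop

lemma coshGap_two_mul (lam t : ℝ) :
    coshGap lam (2 * t) =
      2 * (lam * (t ^ 2 - sinh t ^ 2) - 2 * (t ^ 2 - t * sinh t * cosh t)) := by
  rw [coshGap, sinh_two_mul, cosh_two_mul, cosh_sq]
  ring

lemma coshGap_le {lam s : ℝ} (hlam : 0 ≤ lam) (hs : 0 ≤ s) :
    coshGap lam s ≤ s ^ 4 / 24 * (4 * cosh s - lam) := by
  have hsinh := mul_le_mul_of_nonneg_left (sinh_sub_self_le hs) hs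
  have hcosh := mul_le_mul_of_nonneg_left
    (one_add_sq_div_two_add_pow_four_div_le_cosh s) hlam
  rw [coshGap]
  nlinarith

lemma coshGap_pos {lam s : ℝ} (hlam : 2 < lam) (hs : lam ≤ s) : 0 < coshGap lam s := by
  have hs0 : 0 ≤ s := by linarith
  have hcosh := mul_le_mul_of_nonneg_left (cosh_le_sinh_add_one hs0) (by linarith : 0 ≤ lam)
  have hsinh := mul_nonneg (sub_nonneg.2 hs) (sinh_nonneg_iff.2 hs0)
  have hsq : 0 < (lam / 2 - 1) * s ^ 2 := by
    have : 0 < s := by linarith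
    have : 0 < lam / 2 - 1 := by linarith
    positivity
  rw [coshGap]
  nlinarith

theorem stmt_1 (lam : ℝ) (hlam : 4 < lam) :
    ∃ t : ℝ, t ≠ 0 ∧
      lam * (t^2 - Real.sinh t ^ 2) - 2 * (t^2 - t * Real.sinh t * Real.cosh t) = 0 := by
  obtain ⟨a, ha, hcosh⟩ := exists_pos_cosh_lt (show 1 < lam / 4 by linarith)
  have hneg : coshGap lam a < 0 :=
    (coshGap_le (by linarith) ha.le).trans_lt <|
      mul_neg_of_pos_of_neg (by positivity) (by linarith)
  have hpos : 0 < coshGap lam lam := coshGap_pos (by linarith) le_rfl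
  obtain ⟨s, hs, hroot⟩ := isPreconnected_Ioi.intermediate_value (mem_Ioi.2 ha)
    (mem_Ioi.2 (by linarith : (0 : ℝ) < lam)) (continuous_coshGap lam).continuousOn
    ⟨hneg.le, hpos.le⟩
  refine ⟨s / 2, (half_pos hs).ne', ?_⟩
  have := coshGap_two_mul lam (s / 2)
  rw [mul_div_cancel₀ s two_ne_zero, hroot] at this
  linarith
end

section
/- Let f : ℝⁿ → ℝ be given by f(x) = −(x₁² + ⋯ + x_k²) for some 1 ≤ k ≤ n, and let m : ℝⁿ → ℝ be a continuous compactly supported function. Then as t → +∞, the integrals t^{k/2} ∫_{ℝⁿ} g(x)·e^{t f(x)}·m(x) dx converge, for every bounded continuous test function g, to π^{k/2} ∫_{{x₁=⋯=x_k=0}} g(0,…,0,x_{k+1},…,x_n)·m(0,…,0,x_{k+1},…,x_n) dx_{k+1}⋯dx_n. -/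
/-!
Substituting `x₁ = t^(-1/2) • u` in the first factor turns `t^(k/2) ∫ g e^(t f) m` into
`∫ (g m)(t^(-1/2) • u, y) e^(-|u|²) du dy`. As `g m` is dominated by a multiple of an integrable
function of `y` alone, dominated convergence lets `t → ∞` inside the integral, and the limit
factors as `(∫ e^(-|u|²) du) · ∫ (g m)(0, y) dy = π^(k/2) ∫ (g m)(0, y) dy`.
-/

open MeasureTheory Filter Real Topology Module

theorem integrable_exp_neg_sum_sq (ι : Type*) [Fintype ι] :
    Integrable (fun u : ι → ℝ => exp (-∑ i, u i ^ 2)) := by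
  have h := Integrable.fintype_prod (f := fun (_ : ι) (x : ℝ) => exp (-x ^ 2))
    fun _ => by simpa using integrable_exp_neg_mul_sq one_pos
  simpa [volume_pi, ← exp_sum] using h

theorem integral_exp_neg_sum_sq (ι : Type*) [Fintype ι] :
    ∫ u : ι → ℝ, exp (-∑ i, u i ^ 2) = π ^ ((Fintype.card ι : ℝ) / 2) := by
  have h := integral_fintype_prod_volume_eq_pow (ι := ι) fun x : ℝ => exp (-x ^ 2)
  simp only [← exp_sum, Finset.sum_neg_distrib] at h
  rw [h, show (fun x : ℝ => exp (-x ^ 2)) = fun x => exp (-1 * x ^ 2) by simp,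
    integral_gaussian, div_one, sqrt_eq_rpow, ← rpow_natCast, ← rpow_mul pi_pos.le]
  ring_nf

section ScalingFirstFactor

variable {E F G : Type*} [NormedAddCommGroup E] [NormedSpace ℝ E] [FiniteDimensional ℝ E]
  [MeasurableSpace E] [BorelSpace E] [NormedAddCommGroup G] [NormedSpace ℝ G]
  [MeasurableSpace F] (μ : Measure E) [μ.IsAddHaarMeasure] (ν : Measure F) [SFinite ν]

theorem integral_comp_smul_fst (h : E × F → G) {c : ℝ} (hc : c ≠ 0) :
    ∫ z, h (c • z.1, z.2) ∂μ.prod ν = |c ^ finrank ℝ E|⁻¹ • ∫ z, h z ∂μ.prod ν := by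
  let e : E × F ≃ᵐ E × F :=
    (Homeomorph.smulOfNeZero c hc).toMeasurableEquiv.prodCongr (MeasurableEquiv.refl F)
  have hmap : (μ.prod ν).map e = (ENNReal.ofReal |(c ^ finrank ℝ E)⁻¹| • μ).prod ν := by
    change (μ.prod ν).map (Prod.map (c • ·) id) = _
    rw [← Measure.map_prod_map _ _ (measurable_const_smul c) measurable_id, Measure.map_id,
      Measure.map_addHaar_smul μ hc]
  change ∫ z, h (e z) ∂μ.prod ν = _
  rw [← e.measurableEmbedding.integral_map, hmap, Measure.prod_smul_left, integral_smul_measure,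
    ENNReal.toReal_ofReal (abs_nonneg _), abs_inv]

end ScalingFirstFactor

theorem integral_mul_exp_neg_mul_sum_sq {ι F : Type*} [Fintype ι] [MeasurableSpace F]
    (ν : Measure F) [SFinite ν] (ψ : (ι → ℝ) × F → ℝ) {t : ℝ} (ht : 0 < t) :
    t ^ ((Fintype.card ι : ℝ) / 2) * ∫ x, ψ x * exp (t * -∑ i, x.1 i ^ 2) ∂volume.prod ν =
      ∫ z, ψ (t ^ (-(1 / 2) : ℝ) • z.1, z.2) * exp (-∑ i, z.1 i ^ 2) ∂volume.prod ν := by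
  set c : ℝ := t ^ (-(1 / 2) : ℝ)
  have hc : 0 < c := rpow_pos_of_pos ht _
  have htc : t * c ^ 2 = 1 := by
    rw [← rpow_natCast, ← rpow_mul ht.le]
    norm_num [rpow_neg_one, ht.ne']
  have hexp : ∀ u : ι → ℝ, t * -∑ i, (c • u) i ^ 2 = -∑ i, u i ^ 2 := fun u => by
    simp only [Pi.smul_apply, smul_eq_mul, mul_pow, ← Finset.mul_sum]
    rw [mul_neg, ← mul_assoc, htc, one_mul]
  have hpow : |c ^ Fintype.card ι|⁻¹ = t ^ ((Fintype.card ι : ℝ) / 2) := by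
    rw [abs_of_pos (pow_pos hc _), ← rpow_natCast, ← rpow_mul ht.le, ← rpow_neg ht.le]
    ring_nf
  have h := integral_comp_smul_fst volume ν (fun x => ψ x * exp (t * -∑ i, x.1 i ^ 2)) hc.ne'
  simp only [hexp, finrank_fintype_fun_eq_card, hpow, smul_eq_mul] at h
  exact h.symm

theorem HasCompactSupport.exists_integrable_bound_snd {E F : Type*} [TopologicalSpace E]
    [TopologicalSpace F] [T2Space F] [MeasurableSpace F] [OpensMeasurableSpace F]
    (ν : Measure F) [IsFiniteMeasureOnCompacts ν] {m : E × F → ℝ} (hm : Continuous m)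
    (hmc : HasCompactSupport m) : ∃ b : F → ℝ, Integrable b ν ∧ ∀ x, |m x| ≤ b x.2 := by
  obtain ⟨M, hM⟩ := hmc.exists_bound_of_continuous hm
  have hK : IsCompact (Prod.snd '' tsupport m) := hmc.image continuous_snd
  refine ⟨(Prod.snd '' tsupport m).indicator fun _ => M, ?_, fun x => ?_⟩
  · exact (integrable_indicator_iff hK.measurableSet).2
      (integrableOn_const hK.measure_lt_top.ne)
  · by_cases hx : x ∈ tsupport m
    · rw [Set.indicator_of_mem (Set.mem_image_of_mem _ hx)]
      exact hM x
    · rw [image_eq_zero_of_notMem_tsupport hx, abs_zero]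
      exact Set.indicator_nonneg (fun _ _ => (norm_nonneg _).trans (hM x)) _

section DominatedConvergence

variable {E F : Type*} [NormedAddCommGroup E] [NormedSpace ℝ E] [FiniteDimensional ℝ E]
  [MeasurableSpace E] [BorelSpace E] [TopologicalSpace F] [MeasurableSpace F]
  [OpensMeasurableSpace F] {μ : Measure E} {ν : Measure F} [SFinite μ] [SFinite ν]

theorem tendsto_integral_comp_smul_fst_mul {ψ : E × F → ℝ} (hψ : Continuous ψ) {b : F → ℝ}
    (hb : Integrable b ν) (hψb : ∀ x, |ψ x| ≤ b x.2) {w : E → ℝ} (hw : Integrable w μ) :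
    Tendsto (fun s : ℝ => ∫ z, ψ (s • z.1, z.2) * w z.1 ∂μ.prod ν) (𝓝 0)
      (𝓝 ((∫ u, w u ∂μ) * ∫ y, ψ (0, y) ∂ν)) := by
  have hfactor : ∫ z, ψ (0, z.2) * w z.1 ∂μ.prod ν = (∫ u, w u ∂μ) * ∫ y, ψ (0, y) ∂ν := by
    simp_rw [mul_comm (ψ _)]
    exact integral_prod_mul w fun y => ψ (0, y)
  rw [← hfactor]
  refine tendsto_integral_filter_of_dominated_convergence (fun z => |w z.1| * b z.2) ?_ ?_
    (hw.abs.mul_prod hb) ?_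
  · refine Eventually.of_forall fun s => ?_
    have hscaled : Continuous fun z : E × F => ψ (s • z.1, z.2) := by fun_prop
    exact hscaled.aestronglyMeasurable.mul hw.aestronglyMeasurable.comp_fst
  · refine Eventually.of_forall fun s => Eventually.of_forall fun z => ?_
    rw [norm_mul, Real.norm_eq_abs, Real.norm_eq_abs, mul_comm]
    exact mul_le_mul_of_nonneg_left (hψb _) (abs_nonneg _)
  · refine Eventually.of_forall fun z => ?_
    have hpath : Tendsto (fun s : ℝ => (s • z.1, z.2)) (𝓝 0) (𝓝 (0, z.2)) := by
      have hcont : Continuous fun s : ℝ => (s • z.1, z.2) := by fun_prop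
      simpa using hcont.tendsto 0
    exact ((hψ.tendsto _).comp hpath).mul_const _

end DominatedConvergence

theorem stmt_5_general (k l : ℕ)
    (m g : ((Fin k → ℝ) × (Fin l → ℝ)) → ℝ)
    (hm : Continuous m) (hmc : HasCompactSupport m)
    (hg : Continuous g) (hgb : ∃ C : ℝ, ∀ x, |g x| ≤ C) :
    Tendsto
      (fun t : ℝ => t ^ ((k:ℝ)/2) *
        ∫ x : (Fin k → ℝ) × (Fin l → ℝ),
          g x * Real.exp (t * (-(∑ i, (x.1 i)^2))) * m x)
      atTop
      (nhds (π ^ ((k:ℝ)/2) * ∫ y : Fin l → ℝ, g (0, y) * m (0, y))) := by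
  obtain ⟨C, hC⟩ := hgb
  obtain ⟨b, hb, hmb⟩ := hmc.exists_integrable_bound_snd volume hm
  have hgmb : ∀ x, |g x * m x| ≤ C * b x.2 := fun x => by
    rw [abs_mul]
    exact mul_le_mul (hC x) (hmb x) (abs_nonneg _) ((abs_nonneg _).trans (hC x))
  have hlim := (tendsto_integral_comp_smul_fst_mul (hg.mul hm) (hb.const_mul C) hgmb
    (integrable_exp_neg_sum_sq (Fin k))).comp (tendsto_rpow_neg_atTop (y := 1 / 2) one_half_pos)
  rw [integral_exp_neg_sum_sq, Fintype.card_fin] at hlim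
  refine hlim.congr' ?_
  filter_upwards [eventually_gt_atTop 0] with t ht
  have hscale := integral_mul_exp_neg_mul_sum_sq volume (g * m) ht
  rw [Fintype.card_fin] at hscale
  rw [Measure.volume_eq_prod, Function.comp_apply, ← hscale]
  congr 2 with x
  rw [Pi.mul_apply]
  ring

theorem stmt_5 (k l : ℕ) (hk : 1 ≤ k)
    (m g : ((Fin k → ℝ) × (Fin l → ℝ)) → ℝ)
    (hm : Continuous m) (hmc : HasCompactSupport m)
    (hg : Continuous g) (hgb : ∃ C : ℝ, ∀ x, |g x| ≤ C) :
    Tendsto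
      (fun t : ℝ => t ^ ((k:ℝ)/2) *
        ∫ x : (Fin k → ℝ) × (Fin l → ℝ),
          g x * Real.exp (t * (-(∑ i, (x.1 i)^2))) * m x)
      atTop
      (nhds (π ^ ((k:ℝ)/2) * ∫ y : Fin l → ℝ, g (0, y) * m (0, y))) :=
  stmt_5_general k l m g hm hmc hg hgb
end

section
/- Let ψ : [−m, 0] → ℝ be C² with ψ(0) = 0, ψ(−m) = 0, ψ'(0) < 0, ψ'(−m) > 0, and suppose there exist points −m ≤ a ≤ b ≤ 0 such that ψ is convex on (−m, a) and on (b, 0) and concave on (a, b). Then ψ(τ) > 0 for all τ ∈ (−m, 0). -/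
/-!
The derivative `ψ'` is monotone on `[-m, a]`, antitone on `[a, b]` and monotone on `[b, 0]`,
with `ψ'(-m) > 0 > ψ'(0)`. If `ψ'(τ) ≥ 0`, the last monotone piece forces `τ ≤ b`, and then the
first two pieces give `ψ' ≥ 0` on `[-m, τ]`: `ψ` increases on `[-m, τ]` from `ψ(-m) = 0`, and
strictly so at first since `ψ'(-m) > 0`. If `ψ'(τ) < 0`, the mirror argument shows that `ψ`
decreases on `[τ, 0]` to `ψ(0) = 0`, strictly so at the end.
-/

open Set Filter Topology

section

variable {g : ℝ → ℝ} {p q : ℝ}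

theorem MonotoneOn.Icc_of_Ioo (hg : ContinuousOn g (Icc p q)) (h : MonotoneOn g (Ioo p q)) :
    MonotoneOn g (Icc p q) := by
  have le_of_mem_Ioo : ∀ y ∈ Ioo p q, ∀ x ∈ Icc p y, g x ≤ g y := by
    intro y hy x hx
    have hx' : x ∈ closure (Ioo p y) := by rwa [closure_Ioo hy.1.ne]
    refine ContinuousWithinAt.closure_le hx'
      ((hg x ⟨hx.1, hx.2.trans hy.2.le⟩).mono (Ioo_subset_Icc_self.trans
        (Icc_subset_Icc_right hy.2.le)))
      continuousWithinAt_const fun z hz => h ⟨hz.1, hz.2.trans hy.2⟩ hy hz.2.le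
  intro x hx y hy hxy
  rcases hxy.eq_or_lt with rfl | hxy
  · rfl
  have hy' : y ∈ closure (Ioo x y) := by
    rw [closure_Ioo hxy.ne]
    exact right_mem_Icc.2 hxy.le
  exact ContinuousWithinAt.closure_le hy' continuousWithinAt_const
    ((hg y hy).mono (Ioo_subset_Icc_self.trans (Icc_subset_Icc hx.1 hy.2)))
    fun z hz => le_of_mem_Ioo z ⟨hx.1.trans_lt hz.1, hz.2.trans_le hy.2⟩ x ⟨hx.1, hz.1.le⟩

theorem AntitoneOn.Icc_of_Ioo (hg : ContinuousOn g (Icc p q)) (h : AntitoneOn g (Ioo p q)) :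
    AntitoneOn g (Icc p q) := fun _ hx _ hy hxy =>
  neg_le_neg_iff.1 (MonotoneOn.Icc_of_Ioo hg.neg h.neg hx hy hxy)

end

section

variable {f : ℝ → ℝ} {p q : ℝ}

theorem ConvexOn.monotoneOn_deriv_Icc (hfc : ConvexOn ℝ (Ioo p q) f)
    (hfd : ∀ x ∈ Ioo p q, DifferentiableAt ℝ f x) (hd : ContinuousOn (deriv f) (Icc p q)) :
    MonotoneOn (deriv f) (Icc p q) :=
  (hfc.monotoneOn_deriv hfd).Icc_of_Ioo hd

theorem ConcaveOn.antitoneOn_deriv_Icc (hfc : ConcaveOn ℝ (Ioo p q) f)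
    (hfd : ∀ x ∈ Ioo p q, DifferentiableAt ℝ f x) (hd : ContinuousOn (deriv f) (Icc p q)) :
    AntitoneOn (deriv f) (Icc p q) :=
  (hfc.antitoneOn_deriv hfd).Icc_of_Ioo hd

theorem MonotoneOn.lt_of_deriv_pos {x : ℝ} (hpx : p < x) (hf : MonotoneOn f (Icc p x))
    (hd : 0 < deriv f p) : f p < f x := by
  have hslope : Tendsto (slope f p) (𝓝[>] p) (𝓝 (deriv f p)) :=
    (hasDerivAt_iff_tendsto_slope.1 (differentiableAt_of_deriv_ne_zero hd.ne').hasDerivAt).mono_left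
      (nhdsGT_le_nhdsNE p)
  obtain ⟨y, hy, hpos⟩ := (Eventually.and (Ioo_mem_nhdsGT hpx) (hslope.eventually (lt_mem_nhds hd))).exists
  calc f p < f y := (slope_pos_iff_of_le hy.1.le).1 hpos
    _ ≤ f x := hf ⟨hy.1.le, hy.2.le⟩ ⟨hpx.le, le_rfl⟩ hy.2.le

theorem AntitoneOn.lt_of_deriv_neg {x : ℝ} (hxq : x < q) (hf : AntitoneOn f (Icc x q))
    (hd : deriv f q < 0) : f q < f x := by
  have hslope : Tendsto (slope f q) (𝓝[<] q) (𝓝 (deriv f q)) :=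
    (hasDerivAt_iff_tendsto_slope.1 (differentiableAt_of_deriv_ne_zero hd.ne).hasDerivAt).mono_left
      (nhdsLT_le_nhdsNE q)
  obtain ⟨y, hy, hneg⟩ := (Eventually.and (Ioo_mem_nhdsLT hxq) (hslope.eventually (gt_mem_nhds hd))).exists
  calc f q < f y := (slope_neg_iff_of_le hy.2.le).1 (slope_comm f q y ▸ hneg)
    _ ≤ f x := hf ⟨le_rfl, hxq.le⟩ ⟨hy.1.le, hy.2.le⟩ hy.1.le

end
section

variable {f : ℝ → ℝ} {p a b q τ : ℝ}

theorem pos_of_deriv_nonneg_of_monotoneOn_antitoneOn_monotoneOn (hf : Differentiable ℝ f)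
    (h₁ : MonotoneOn (deriv f) (Icc p a)) (h₂ : AntitoneOn (deriv f) (Icc a b))
    (h₃ : MonotoneOn (deriv f) (Icc b q)) (hdp : 0 < deriv f p) (hdq : deriv f q < 0)
    (hfp : f p = 0) (hτ : τ ∈ Ioo p q) (hτd : 0 ≤ deriv f τ) : 0 < f τ := by
  have hτb : τ ≤ b := by
    by_contra! hbτ
    exact (h₃ ⟨hbτ.le, hτ.2.le⟩ ⟨(hbτ.trans hτ.2).le, le_rfl⟩ hτ.2.le).not_gt (hdq.trans_le hτd)
  have hd_nonneg : ∀ s ∈ Icc p τ, 0 ≤ deriv f s := by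
    intro s hs
    rcases le_total s a with hsa | has
    · exact hdp.le.trans (h₁ ⟨le_rfl, hs.1.trans hsa⟩ ⟨hs.1, hsa⟩ hs.1)
    · exact hτd.trans (h₂ ⟨has, hs.2.trans hτb⟩ ⟨has.trans hs.2, hτb⟩ hs.2)
  have hmono : MonotoneOn f (Icc p τ) :=
    monotoneOn_of_deriv_nonneg (convex_Icc p τ) hf.continuous.continuousOn hf.differentiableOn
      fun s hs => hd_nonneg s (interior_subset hs)
  exact hfp ▸ hmono.lt_of_deriv_pos hτ.1 hdp

theorem pos_of_deriv_neg_of_monotoneOn_antitoneOn_monotoneOn (hf : Differentiable ℝ f)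
    (h₁ : MonotoneOn (deriv f) (Icc p a)) (h₂ : AntitoneOn (deriv f) (Icc a b))
    (h₃ : MonotoneOn (deriv f) (Icc b q)) (hdp : 0 < deriv f p) (hdq : deriv f q < 0)
    (hfq : f q = 0) (hτ : τ ∈ Ioo p q) (hτd : deriv f τ < 0) : 0 < f τ := by
  have haτ : a ≤ τ := by
    by_contra! hτa
    exact (h₁ ⟨le_rfl, (hτ.1.trans hτa).le⟩ ⟨hτ.1.le, hτa.le⟩ hτ.1.le).not_gt (hτd.trans hdp)
  have hd_nonpos : ∀ s ∈ Icc τ q, deriv f s ≤ 0 := by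
    intro s hs
    rcases le_total b s with hbs | hsb
    · exact (h₃ ⟨hbs, hs.2⟩ ⟨hbs.trans hs.2, le_rfl⟩ hs.2).trans hdq.le
    · exact (h₂ ⟨haτ, hs.1.trans hsb⟩ ⟨haτ.trans hs.1, hsb⟩ hs.1).trans hτd.le
  have hanti : AntitoneOn f (Icc τ q) :=
    antitoneOn_of_deriv_nonpos (convex_Icc τ q) hf.continuous.continuousOn hf.differentiableOn
      fun s hs => hd_nonpos s (interior_subset hs)
  exact hfq ▸ hanti.lt_of_deriv_neg hτ.2 hdq

end

theorem stmt_16_general (m : ℝ) (ψ : ℝ → ℝ) (hψ : ContDiff ℝ 2 ψ)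
    (h0 : ψ 0 = 0) (hmval : ψ (-m) = 0)
    (hd0 : deriv ψ 0 < 0) (hdm : 0 < deriv ψ (-m))
    (a b : ℝ)
    (hconv1 : ConvexOn ℝ (Ioo (-m) a) ψ)
    (hconv2 : ConvexOn ℝ (Ioo b 0) ψ)
    (hconc : ConcaveOn ℝ (Ioo a b) ψ) :
    ∀ τ ∈ Ioo (-m) 0, 0 < ψ τ := by
  have hdiff : Differentiable ℝ ψ := hψ.differentiable two_ne_zero
  have hd : Continuous (deriv ψ) := hψ.continuous_deriv one_le_two
  have h₁ := hconv1.monotoneOn_deriv_Icc (fun x _ => hdiff x) hd.continuousOn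
  have h₂ := hconc.antitoneOn_deriv_Icc (fun x _ => hdiff x) hd.continuousOn
  have h₃ := hconv2.monotoneOn_deriv_Icc (fun x _ => hdiff x) hd.continuousOn
  intro τ hτ
  rcases le_or_gt 0 (deriv ψ τ) with hτd | hτd
  · exact pos_of_deriv_nonneg_of_monotoneOn_antitoneOn_monotoneOn hdiff h₁ h₂ h₃ hdm hd0 hmval
      hτ hτd
  · exact pos_of_deriv_neg_of_monotoneOn_antitoneOn_monotoneOn hdiff h₁ h₂ h₃ hdm hd0 h0 hτ hτd

theorem stmt_16 (m : ℝ) (hm : 0 < m) (ψ : ℝ → ℝ) (hψ : ContDiff ℝ 2 ψ)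
    (h0 : ψ 0 = 0) (hmval : ψ (-m) = 0)
    (hd0 : deriv ψ 0 < 0) (hdm : 0 < deriv ψ (-m))
    (a b : ℝ) (hab : -m ≤ a ∧ a ≤ b ∧ b ≤ 0)
    (hconv1 : ConvexOn ℝ (Ioo (-m) a) ψ)
    (hconv2 : ConvexOn ℝ (Ioo b 0) ψ)
    (hconc : ConcaveOn ℝ (Ioo a b) ψ) :
    ∀ τ ∈ Ioo (-m) 0, 0 < ψ τ :=
  stmt_16_general m ψ hψ h0 hmval hd0 hdm a b hconv1 hconv2 hconc
end

section
/- Define for χ ≠ 0: α(χ) = (−2χ⁴ + χ³ + 2χ² − 6χ)e^{−2χ} + 9χ³ − 14χ² + 6χ, γ(χ) = (−χ³ + 2χ² − 2χ)e^{−2χ} + 3χ³ − 6χ² + 2χ, β(χ) = (4χ² + 6χ − 6)e^{−2χ} + 6χ³ + 5χ² + 28χ − 6, δ(χ) = (−χ² + 4χ − 2)e^{−2χ} + 7χ² + 8χ − 2. Then for all χ ∈ (−1, 0): α(χ) > 0, γ(χ) > 0, β(χ) < 0, and δ(χ) < 0. -/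
open Set

theorem stmt_18 :
    ∀ χ ∈ Ioo (-1 : ℝ) 0,
      0 < (-2*χ^4 + χ^3 + 2*χ^2 - 6*χ) * Real.exp (-2*χ) + 9*χ^3 - 14*χ^2 + 6*χ ∧
      0 < (-χ^3 + 2*χ^2 - 2*χ) * Real.exp (-2*χ) + 3*χ^3 - 6*χ^2 + 2*χ ∧
      (4*χ^2 + 6*χ - 6) * Real.exp (-2*χ) + 6*χ^3 + 5*χ^2 + 28*χ - 6 < 0 ∧
      (-χ^2 + 4*χ - 2) * Real.exp (-2*χ) + 7*χ^2 + 8*χ - 2 < 0 := by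
  rintro χ ⟨h1, h2⟩
  have hE : 0 < Real.exp (-2*χ) := Real.exp_pos _
  have hx : (0:ℝ) ≤ -2*χ := by linarith
  have hT : 1 + (-2*χ) + (-2*χ)^2/2 + (-2*χ)^3/6 ≤ Real.exp (-2*χ) := by
    have h := Real.sum_le_exp_of_nonneg hx 4
    simp [Finset.sum_range_succ, Nat.factorial] at h
    ring_nf at h ⊢
    linarith
  have hχ1 : (0:ℝ) < χ + 1 := by linarith
  have hχ2 : (0:ℝ) < -χ := by linarith
  have hcube : (0:ℝ) < -χ^3 := by nlinarith [mul_pos (mul_pos hχ2 hχ2) hχ2]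
  refine ⟨?_, ?_, ?_, ?_⟩
  · -- α
    have hp : 0 < -2*χ^4 + χ^3 + 2*χ^2 - 6*χ := by
      nlinarith [sq_nonneg χ, mul_pos hχ1 hχ2, sq_nonneg (χ+1), mul_pos (mul_pos hχ1 hχ2) hχ2]
    have hr : 4*χ^4 - 8*χ^3 + 5*χ^2 + 12*χ - 9 < 0 := by
      nlinarith [mul_pos hχ1 hχ2, mul_pos (mul_pos hχ1 hχ2) hχ2,
        mul_pos (mul_pos (mul_pos hχ1 hχ2) hχ2) hχ2, sq_nonneg χ, sq_nonneg (χ+1)]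
    have hmul : (-2*χ^4 + χ^3 + 2*χ^2 - 6*χ) * (1 + (-2*χ) + (-2*χ)^2/2 + (-2*χ)^3/6)
        ≤ (-2*χ^4 + χ^3 + 2*χ^2 - 6*χ) * Real.exp (-2*χ) :=
      mul_le_mul_of_nonneg_left hT hp.le
    nlinarith [mul_pos hcube (neg_pos.mpr hr), hmul]
  · -- γ
    have hc : 0 < -χ^3 + 2*χ^2 - 2*χ := by nlinarith [sq_nonneg χ, sq_nonneg (χ-1)]
    have hr : 2*χ^3 - 7*χ^2 + 13*χ - 9 < 0 := by nlinarith [sq_nonneg χ]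
    have hmul : (-χ^3 + 2*χ^2 - 2*χ) * (1 + (-2*χ) + (-2*χ)^2/2 + (-2*χ)^3/6)
        ≤ (-χ^3 + 2*χ^2 - 2*χ) * Real.exp (-2*χ) :=
      mul_le_mul_of_nonneg_left hT hc.le
    nlinarith [mul_pos hcube (neg_pos.mpr hr), hmul]
  · -- β
    have hcoef : 4*χ^2 + 6*χ - 6 < 0 := by nlinarith [mul_pos hχ1 hχ2]
    have hrem : 6*χ^3 + 5*χ^2 + 28*χ - 6 < 0 := by
      nlinarith [mul_pos hχ1 hχ2, hcube]
    nlinarith [mul_neg_of_neg_of_pos hcoef hE]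
  · -- δ
    have hcoef : -χ^2 + 4*χ - 2 < 0 := by nlinarith [sq_nonneg χ]
    have hrem : 7*χ^2 + 8*χ - 2 < 0 := by nlinarith [mul_pos hχ1 hχ2]
    nlinarith [mul_neg_of_neg_of_pos hcoef hE]
end
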